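/- arXiv:2503.06636 — 2 statements merged into one kernel-verified Lean document; each statement's English description precedes it below -/
import Mathlib

section
/- Let $n>2s$, $\mu\in(0,n)$ with $0<\mu\le 4s$. For $\lambda>0$, $\xi\in\mathbb{R}^n$ and $z=\lambda(x-\xi)$ with $\tau(z)=(1+|z|^2)^{1/2}$, there exists a constant $C>0$ such that for all $x\in\mathbb{R}^n$: $\int_{\mathbb{R}^n} |y|^{-\mu}\,\frac{\lambda^{n-\mu/2}}{(1+\lambda^2|x-\xi-y|^2)^{(2n-\mu)/2}}\,dy \le C\,\frac{\lambda^{\mu/2}}{\tau(z)^{\mu}}$. -/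
noncomputable section
open MeasureTheory Real Filter
open scoped FourierTransform Topology

namespace NonlocalSobolev

abbrev E (n : ℕ) := EuclideanSpace ℝ (Fin n)

/-- Riesz-type convolution `(|x|^{-μ} ∗ f)(x) = ∫ |x-y|^{-μ} f(y) dy`. -/
def rieszConv (n : ℕ) (μ : ℝ) (f : E n → ℝ) (x : E n) : ℝ :=
  ∫ y : E n, ‖x - y‖ ^ (-μ) * f y

/-- Fourier transform of a real-valued function. -/
def ft (n : ℕ) (u : E n → ℝ) : E n → ℂ :=
  𝓕 (fun x => (u x : ℂ))

/-- Squared homogeneous Sobolev norm `‖u‖_{Ḣ^s}^2 = ∫ |û(ξ)|^2 |ξ|^{2s} dξ`. -/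
def hsNormSq (n : ℕ) (s : ℝ) (u : E n → ℝ) : ℝ :=
  ∫ ξ : E n, ‖ft n u ξ‖ ^ 2 * ‖ξ‖ ^ (2 * s)

/-- Homogeneous Sobolev norm. -/
def hsNorm (n : ℕ) (s : ℝ) (u : E n → ℝ) : ℝ := Real.sqrt (hsNormSq n s u)

/-- The `Ḣ^s` inner product. -/
def hsInner (n : ℕ) (s : ℝ) (u v : E n → ℝ) : ℝ :=
  ∫ ξ : E n, (ft n u ξ * (starRingEnd ℂ) (ft n v ξ)).re * ‖ξ‖ ^ (2 * s)

/-- The fractional Laplacian `(-Δ)^s u` defined as a Fourier multiplier. -/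
def fracLaplacian (n : ℕ) (s : ℝ) (u : E n → ℝ) (x : E n) : ℝ :=
  (𝓕⁻ (fun ξ : E n => ((‖ξ‖ ^ (2 * s) : ℝ) : ℂ) * ft n u ξ) x).re

/-- Membership in `Ḣ^s(ℝⁿ)`: the Fourier-side energy density is integrable. -/
def MemHs (n : ℕ) (s : ℝ) (u : E n → ℝ) : Prop :=
  Integrable (fun ξ : E n => ‖ft n u ξ‖ ^ 2 * ‖ξ‖ ^ (2 * s))

/-- The dual `Ḣ^{-s}` norm, via duality against the unit ball of `Ḣ^s`. -/
def dualNorm (n : ℕ) (s : ℝ) (f : E n → ℝ) : ℝ :=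
  sSup { r | ∃ v : E n → ℝ, MemHs n s v ∧ hsNormSq n s v ≤ 1 ∧ r = ∫ x : E n, f x * v x }

/-- The critical Hartree exponent `p_s = (2n-μ)/(n-2s)`. -/
def pExp (n : ℕ) (s μ : ℝ) : ℝ := (2 * n - μ) / (n - 2 * s)

/-- The critical Sobolev exponent `2_s^* = 2n/(n-2s)`. -/
def twoStar (n : ℕ) (s : ℝ) : ℝ := 2 * n / (n - 2 * s)

/-- The nonlocal Hartree energy `∫ (|x|^{-μ} ∗ |u|^{p_s}) |u|^{p_s}`. -/
def energy (n : ℕ) (s μ : ℝ) (u : E n → ℝ) : ℝ :=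
  ∫ x : E n, rieszConv n μ (fun y => |u y| ^ pExp n s μ) x * |u x| ^ pExp n s μ

/-- The explicit constant `α_{n,μ,s}` in the bubble. -/
def alphaConst (n : ℕ) (s μ : ℝ) : ℝ :=
  ((2 ^ (2 * s) * Real.Gamma ((n + 2 * s) / 2) * Real.Gamma ((2 * n - μ) / 2)) /
      (Real.pi ^ ((n : ℝ) / 2) * Real.Gamma ((n - 2 * s) / 2) * Real.Gamma ((n - μ) / 2))) ^
    (((n : ℝ) - 2 * s) / (2 * ((n : ℝ) + 2 * s - μ)))

/-- The bubble `W[ξ,λ](x) = α_{n,μ,s} (λ/(1+λ²|x-ξ|²))^{(n-2s)/2}`. -/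
def bubble (n : ℕ) (s μ : ℝ) (ξ : E n) (lam : ℝ) (x : E n) : ℝ :=
  alphaConst n s μ * (lam / (1 + lam ^ 2 * ‖x - ξ‖ ^ 2)) ^ (((n : ℝ) - 2 * s) / 2)

/-- `∂_λ W[ξ,λ]`. -/
def bubbleDLam (n : ℕ) (s μ : ℝ) (ξ : E n) (lam : ℝ) (x : E n) : ℝ :=
  deriv (fun t : ℝ => bubble n s μ ξ t x) lam

/-- `∂_{ξ_j} W[ξ,λ]`. -/
def bubbleDXi (n : ℕ) (s μ : ℝ) (ξ : E n) (lam : ℝ) (j : Fin n) (x : E n) : ℝ :=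
  deriv (fun t : ℝ => bubble n s μ (ξ + t • EuclideanSpace.single j (1 : ℝ)) lam x) 0

/-- The interaction quantity `Q_{ij}`. -/
def Qij (n : ℕ) (s : ℝ) (ξi ξj : E n) (li lj : ℝ) : ℝ :=
  (li / lj + lj / li + li * lj * ‖ξi - ξj‖ ^ 2) ^ (-(((n : ℝ) - 2 * s)) / 2)

/-- `C` is the optimal constant in the nonlocal Sobolev (HLS-type) inequality. -/
def IsOptimalHLS (n : ℕ) (s μ : ℝ) (C : ℝ) : Prop :=
  0 < C ∧
    (∀ u : E n → ℝ, MemHs n s u →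
      C * (energy n s μ u) ^ (1 / pExp n s μ) ≤ hsNormSq n s u) ∧
    ∀ C' : ℝ,
      (∀ u : E n → ℝ, MemHs n s u →
        C' * (energy n s μ u) ^ (1 / pExp n s μ) ≤ hsNormSq n s u) → C' ≤ C

section AuxRiesz
open Metric Set

lemma exists_dyadic {r t : ℝ} (hr : 0 < r) (ht0 : 0 < t) (htr : t < r) :
    ∃ k : ℕ, r * (1/2 : ℝ) ^ (k+1) ≤ t ∧ t < r * (1/2 : ℝ) ^ k := by
  have hex : ∃ k : ℕ, r * (1/2 : ℝ) ^ k ≤ t := by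
    obtain ⟨m, hm⟩ := exists_pow_lt_of_lt_one (div_pos ht0 hr) (by norm_num : (1/2 : ℝ) < 1)
    exact ⟨m, by rw [mul_comm]; exact le_of_lt ((lt_div_iff₀ hr).1 hm)⟩
  classical
  let k0 := Nat.find hex
  have hk0 : r * (1/2 : ℝ) ^ k0 ≤ t := Nat.find_spec hex
  have hk0pos : 0 < k0 := by
    rcases Nat.eq_zero_or_pos k0 with h | h
    · exfalso; rw [h] at hk0; simp at hk0; linarith
    · exact h
  refine ⟨k0 - 1, ?_, ?_⟩
  · have : k0 - 1 + 1 = k0 := Nat.succ_pred_eq_of_pos hk0pos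
    rw [this]; exact hk0
  · have := Nat.find_min hex (m := k0 - 1) (by omega)
    push_neg at this; exact this

lemma integrableOn_riesz_ball (n : ℕ) (μ : ℝ) (hn : 0 < n) (hμ0 : 0 < μ) (hμn : μ < (n : ℝ))
    {r : ℝ} (hr : 0 < r) :
    IntegrableOn (fun w : E n => ‖w‖ ^ (-μ)) (ball (0 : E n) r) volume := by
  have : Nonempty (Fin n) := ⟨⟨0, hn⟩⟩
  have : Nontrivial (E n) := inferInstance
  constructor
  · exact (Measurable.aestronglyMeasurable (by fun_prop)).restrict
  · rw [hasFiniteIntegral_iff_ofReal]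
    swap
    · exact Eventually.of_forall fun w => rpow_nonneg (norm_nonneg _) _
    -- bound the lintegral over the ball by the sum over dyadic shells
    set T : ℕ → Set (E n) := fun k => ball (0 : E n) (r * (1/2)^k) \ ball 0 (r * (1/2)^(k+1))
      with hT
    have hsub : ball (0 : E n) r ⊆ {(0 : E n)} ∪ ⋃ k, T k := by
      intro w hw
      rcases eq_or_ne w 0 with h | h
      · exact Or.inl (by simp [h])
      refine Or.inr (mem_iUnion.2 ?_)
      have hw0 : 0 < ‖w‖ := norm_pos_iff.2 h
      obtain ⟨k, h1, h2⟩ := exists_dyadic hr hw0 (mem_ball_zero_iff.1 hw)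
      exact ⟨k, mem_ball_zero_iff.2 h2, fun hc => absurd (mem_ball_zero_iff.1 hc) (not_lt.2 h1)⟩
    calc ∫⁻ w in ball (0 : E n) r, ENNReal.ofReal (‖w‖ ^ (-μ))
        ≤ ∫⁻ w in {(0 : E n)} ∪ ⋃ k, T k, ENNReal.ofReal (‖w‖ ^ (-μ)) :=
          lintegral_mono_set hsub
      _ ≤ (∫⁻ w in {(0 : E n)}, ENNReal.ofReal (‖w‖ ^ (-μ)))
            + ∫⁻ w in ⋃ k, T k, ENNReal.ofReal (‖w‖ ^ (-μ)) := lintegral_union_le _ _ _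
      _ ≤ 0 + ∑' k, ∫⁻ w in T k, ENNReal.ofReal (‖w‖ ^ (-μ)) := by
          gcongr
          · have : volume ({(0 : E n)} : Set (E n)) = 0 := measure_singleton 0
            rw [setLIntegral_measure_zero _ _ this]
          · exact lintegral_iUnion_le _ _
      _ < ⊤ := by
          rw [zero_add]
          have hbd : ∀ k : ℕ, ∫⁻ w in T k, ENNReal.ofReal (‖w‖ ^ (-μ))
              ≤ ENNReal.ofReal ((r * (1/2)^(k+1)) ^ (-μ) * (r * (1/2)^k) ^ (n:ℕ))
                * volume (ball (0 : E n) 1) := by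
            intro k
            have hrk : (0:ℝ) < r * (1/2)^(k+1) := by positivity
            have hbound : ∀ w ∈ T k, ENNReal.ofReal (‖w‖ ^ (-μ))
                ≤ ENNReal.ofReal ((r * (1/2)^(k+1)) ^ (-μ)) := by
              intro w hw
              have h1 : r * (1/2)^(k+1) ≤ ‖w‖ := by
                by_contra hc
                exact hw.2 (mem_ball_zero_iff.2 (lt_of_not_ge hc))
              exact ENNReal.ofReal_le_ofReal
                (rpow_le_rpow_of_nonpos hrk h1 (neg_nonpos.2 hμ0.le))
            calc ∫⁻ w in T k, ENNReal.ofReal (‖w‖ ^ (-μ))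
                ≤ ∫⁻ _ in T k, ENNReal.ofReal ((r * (1/2)^(k+1)) ^ (-μ)) := by
                  apply setLIntegral_mono_ae
                  · fun_prop
                  · exact Eventually.of_forall hbound
              _ = ENNReal.ofReal ((r * (1/2)^(k+1)) ^ (-μ)) * volume (T k) := by
                  rw [setLIntegral_const]
              _ ≤ ENNReal.ofReal ((r * (1/2)^(k+1)) ^ (-μ))
                    * (ENNReal.ofReal ((r * (1/2)^k) ^ (n:ℕ)) * volume (ball (0 : E n) 1)) := by
                  gcongr
                  calc volume (T k) ≤ volume (ball (0 : E n) (r * (1/2)^k)) :=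
                        measure_mono diff_subset
                    _ = ENNReal.ofReal ((r * (1/2)^k) ^ (Module.finrank ℝ (E n)))
                          * volume (ball (0 : E n) 1) := Measure.addHaar_ball _ _ (by positivity)
                    _ = _ := by rw [finrank_euclideanSpace_fin]
              _ = _ := by
                  rw [← mul_assoc, ← ENNReal.ofReal_mul (by positivity)]
          set c : ℝ := 1/2 with hc
          have hcpos : (0:ℝ) < c := by norm_num
          set b : ℝ := c ^ ((n:ℝ) - μ) with hb
          have hb0 : 0 ≤ b := by positivity
          have hb1 : b < 1 := rpow_lt_one hcpos.le (by norm_num) (by linarith)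
          set C0 : ℝ := r ^ ((n:ℝ) - μ) * c ^ (-μ) with hC0
          have hC00 : 0 ≤ C0 := by positivity
          have ha : ∀ k : ℕ, (r * c^(k+1)) ^ (-μ) * (r * c^k) ^ (n:ℕ) = C0 * b ^ k := by
            intro k
            calc (r * c^(k+1)) ^ (-μ) * (r * c^k) ^ (n:ℕ)
                = (r * c^(k+1)) ^ (-μ) * (r * c^k) ^ ((n:ℕ):ℝ) := by
                  rw [Real.rpow_natCast]
              _ = r^(-μ) * ((c^(k+1):ℝ))^(-μ) * (r^((n:ℕ):ℝ) * ((c^k:ℝ))^((n:ℕ):ℝ)) := by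
                  rw [Real.mul_rpow hr.le (by positivity), Real.mul_rpow hr.le (by positivity)]
              _ = r^((n:ℝ)-μ) * (c ^ ((((k:ℝ))+1) * (-μ)) * c ^ ((k:ℝ) * (n:ℝ))) := by
                  rw [← Real.rpow_natCast c (k+1), ← Real.rpow_natCast c k,
                      ← Real.rpow_mul hcpos.le, ← Real.rpow_mul hcpos.le,
                      show r ^ ((n:ℝ) - μ) = r ^ (-μ) * r ^ ((n:ℝ)) by
                        rw [← Real.rpow_add hr]; ring_nf]
                  push_cast
                  ring
              _ = C0 * b ^ k := by
                  rw [hC0, hb, ← Real.rpow_natCast (c ^ ((n:ℝ) - μ)) k,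
                      ← Real.rpow_mul hcpos.le, mul_assoc, ← Real.rpow_add hcpos,
                      ← Real.rpow_add hcpos]
                  rw [show ((k:ℝ)+1) * (-μ) + (k:ℝ) * (n:ℝ) = -μ + ((n:ℝ) - μ) * (k:ℝ) by ring]
          calc ∑' k, ∫⁻ w in T k, ENNReal.ofReal (‖w‖ ^ (-μ))
              ≤ ∑' k : ℕ, ENNReal.ofReal ((r * c^(k+1)) ^ (-μ) * (r * c^k) ^ (n:ℕ))
                  * volume (ball (0 : E n) 1) := ENNReal.tsum_le_tsum hbd
            _ = ENNReal.ofReal C0 * (((∑' k : ℕ, (ENNReal.ofReal b) ^ k))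
                  * volume (ball (0 : E n) 1)) := by
                rw [← ENNReal.tsum_mul_right, ← ENNReal.tsum_mul_left]
                congr 1 with k
                rw [ha k, ENNReal.ofReal_mul hC00, ENNReal.ofReal_pow hb0, mul_assoc]
            _ < ⊤ := by
                apply ENNReal.mul_lt_top ENNReal.ofReal_lt_top
                apply ENNReal.mul_lt_top _ measure_ball_lt_top
                rw [ENNReal.tsum_geometric]
                rw [ENNReal.inv_lt_top]
                rw [tsub_pos_iff_lt]
                exact ENNReal.ofReal_lt_one.2 hb1

lemma tau_comp (a b c : ℝ) (ha : 0 ≤ a) (hb : 0 ≤ b) (hc : 0 ≤ c) (habc : a ≤ b + c)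
    (hq : 4 * b^2 ≤ 1 + a^2) : 1 + a^2 ≤ 16 * (1 + c^2) := by
  nlinarith [sq_nonneg (b - c), sq_nonneg (b + c), sq_nonneg (a - b - c), mul_nonneg hb hc,
    sq_nonneg (3*b - c)]

lemma ball_value (n : ℕ) (μ : ℝ) {r : ℝ} (hr : 0 < r) :
    ∫ w in ball (0 : E n) r, ‖w‖ ^ (-μ)
      = r ^ ((n : ℝ) - μ) * ∫ w in ball (0 : E n) 1, ‖w‖ ^ (-μ) := by
  have h := Measure.setIntegral_comp_smul_of_pos (volume : Measure (E n))
    (fun w : E n => ‖w‖ ^ (-μ)) (ball (0 : E n) 1) hr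
  rw [smul_unitBall_of_pos hr] at h
  have h2 : ∀ x : E n, ‖r • x‖ ^ (-μ) = r ^ (-μ) * ‖x‖ ^ (-μ) := by
    intro x
    rw [norm_smul, Real.norm_eq_abs, abs_of_pos hr, Real.mul_rpow hr.le (norm_nonneg _)]
  simp only [h2] at h
  rw [MeasureTheory.integral_const_mul] at h
  rw [smul_eq_mul] at h
  rw [finrank_euclideanSpace_fin] at h
  have hrn : (r ^ (n : ℕ) : ℝ) = r ^ ((n : ℕ) : ℝ) := (Real.rpow_natCast r n).symm
  have : ∫ w in ball (0 : E n) r, ‖w‖ ^ (-μ)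
      = r ^ (n : ℕ) * (r ^ (-μ) * ∫ w in ball (0 : E n) 1, ‖w‖ ^ (-μ)) := by
    rw [h, ← mul_assoc, mul_inv_cancel₀ (by positivity), one_mul]
  rw [this, hrn, ← mul_assoc, ← Real.rpow_add hr]
  ring_nf

lemma key_estimate (n : ℕ) (μ : ℝ) (hn : 0 < n) (hμ0 : 0 < μ) (hμn : μ < (n : ℝ)) :
    ∃ C : ℝ, 0 < C ∧ ∀ z : E n,
      (∫ w : E n, ‖w‖ ^ (-μ) * (1 + ‖z - w‖ ^ 2) ^ (-(2 * (n : ℝ) - μ) / 2))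
        ≤ C * (1 + ‖z‖ ^ 2) ^ (-(μ / 2)) := by
  have hnr : ((Module.finrank ℝ (E n) : ℝ)) < 2 * (n : ℝ) - μ := by
    rw [finrank_euclideanSpace_fin]; linarith
  have hK : Integrable (fun u : E n => ((1 : ℝ) + ‖u‖ ^ 2) ^ (-(2 * (n : ℝ) - μ) / 2)) volume :=
    integrable_rpow_neg_one_add_norm_sq hnr
  set q : ℝ := (2 * (n : ℝ) - μ) / 2 with hq
  have hn0 : (0:ℝ) ≤ (n:ℝ) := Nat.cast_nonneg n
  have hqpos : 0 < q := by rw [hq]; apply div_pos (by linarith) two_pos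
  set A : ℝ := ∫ u : E n, ((1 : ℝ) + ‖u‖ ^ 2) ^ (-(2 * (n : ℝ) - μ) / 2) with hA
  have hA0 : 0 ≤ A := integral_nonneg fun u => Real.rpow_nonneg (by positivity) _
  set J : ℝ := ∫ w in ball (0 : E n) 1, ‖w‖ ^ (-μ) with hJ
  have hJ0 : 0 ≤ J := setIntegral_nonneg measurableSet_ball
    fun w _ => Real.rpow_nonneg (norm_nonneg _) _
  refine ⟨16 ^ q * J + 2 ^ μ * A + 1, add_pos_of_nonneg_of_pos
    (add_nonneg (mul_nonneg (Real.rpow_nonneg (by norm_num) _) hJ0)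
      (mul_nonneg (Real.rpow_nonneg (by norm_num) _) hA0)) one_pos, fun z => ?_⟩
  set s : ℝ := 1 + ‖z‖ ^ 2 with hs
  have hs1 : 1 ≤ s := by rw [hs]; nlinarith [sq_nonneg ‖z‖]
  have hs0 : 0 < s := lt_of_lt_of_le one_pos hs1
  set r : ℝ := s ^ ((1 : ℝ)/2) / 2 with hr
  have hrpos : 0 < r := div_pos (Real.rpow_pos_of_pos hs0 _) two_pos
  set f : E n → ℝ := fun w => ‖w‖ ^ (-μ) * (1 + ‖z - w‖ ^ 2) ^ (-(2 * (n : ℝ) - μ) / 2) with hf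
  have hf0 : ∀ w, 0 ≤ f w := fun w =>
    mul_nonneg (Real.rpow_nonneg (norm_nonneg _) _) (Real.rpow_nonneg (by positivity) _)
  have hKz : Integrable (fun w : E n => ((1 : ℝ) + ‖z - w‖ ^ 2) ^ (-(2 * (n : ℝ) - μ) / 2))
      volume := hK.comp_sub_left z
  have hKz0 : ∀ w : E n, (0:ℝ) ≤ ((1 : ℝ) + ‖z - w‖ ^ 2) ^ (-(2 * (n : ℝ) - μ) / 2) :=
    fun w => Real.rpow_nonneg (by positivity) _
  have hexp : (-(2 * (n : ℝ) - μ) / 2) ≤ 0 :=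
    div_nonpos_of_nonpos_of_nonneg (by linarith) (by norm_num)
  -- integrability of f
  have hmeas : AEStronglyMeasurable f volume :=
    Measurable.aestronglyMeasurable (by fun_prop)
  have hfint : Integrable f volume := by
    have hg : Integrable (fun w : E n =>
        (ball (0 : E n) 1).indicator (fun w => ‖w‖ ^ (-μ)) w
          + ((1 : ℝ) + ‖z - w‖ ^ 2) ^ (-(2 * (n : ℝ) - μ) / 2)) volume := by
      refine Integrable.add ?_ hKz
      rw [integrable_indicator_iff measurableSet_ball]
      exact integrableOn_riesz_ball n μ hn hμ0 hμn one_pos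
    refine hg.mono' hmeas (Eventually.of_forall fun w => ?_)
    rw [Real.norm_eq_abs, abs_of_nonneg (hf0 w)]
    rcases lt_or_ge ‖w‖ 1 with h | h
    · have h2 : ((1 : ℝ) + ‖z - w‖ ^ 2) ^ (-(2 * (n : ℝ) - μ) / 2) ≤ 1 :=
        Real.rpow_le_one_of_one_le_of_nonpos (le_add_of_nonneg_right (by positivity)) hexp
      have : f w ≤ ‖w‖ ^ (-μ) := by
        calc f w ≤ ‖w‖ ^ (-μ) * 1 :=
              mul_le_mul_of_nonneg_left h2 (Real.rpow_nonneg (norm_nonneg _) _)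
          _ = ‖w‖ ^ (-μ) := mul_one _
      refine this.trans ?_
      rw [Set.indicator_of_mem (mem_ball_zero_iff.2 h)]
      exact le_add_of_nonneg_right (hKz0 w)
    · have h1 : ‖w‖ ^ (-μ) ≤ 1 :=
        Real.rpow_le_one_of_one_le_of_nonpos h (neg_nonpos.2 hμ0.le)
      have : f w ≤ ((1 : ℝ) + ‖z - w‖ ^ 2) ^ (-(2 * (n : ℝ) - μ) / 2) := by
        calc f w ≤ 1 * ((1 : ℝ) + ‖z - w‖ ^ 2) ^ (-(2 * (n : ℝ) - μ) / 2) :=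
              mul_le_mul_of_nonneg_right h1 (hKz0 w)
          _ = _ := one_mul _
      refine this.trans ?_
      exact le_add_of_nonneg_left (Set.indicator_nonneg
        (fun y _ => Real.rpow_nonneg (norm_nonneg _) _) w)
  -- split the integral
  have hsplit : (∫ w, f w) = (∫ w in ball (0 : E n) r, f w)
      + ∫ w in (ball (0 : E n) r)ᶜ, f w :=
    (integral_add_compl measurableSet_ball hfint).symm
  -- inner region
  have hscomp : ∀ w ∈ ball (0 : E n) r, s ≤ 16 * (1 + ‖z - w‖ ^ 2) := by
    intro w hw
    have hwr : ‖w‖ < r := mem_ball_zero_iff.1 hw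
    have hw2 : 4 * ‖w‖ ^ 2 ≤ 1 + ‖z‖ ^ 2 := by
      have h1 : ‖w‖ ^ 2 ≤ r ^ 2 := by
        apply sq_le_sq' _ hwr.le; linarith [norm_nonneg w, hrpos]
      have h2 : r ^ 2 = s / 4 := by
        rw [hr, div_pow, ← Real.rpow_natCast (s ^ ((1:ℝ)/2)) 2, ← Real.rpow_mul hs0.le]
        norm_num
      rw [h2] at h1; linarith
    have := tau_comp ‖z‖ ‖w‖ ‖z - w‖ (norm_nonneg _) (norm_nonneg _) (norm_nonneg _)
      (by calc ‖z‖ = ‖w + (z - w)‖ := by rw [add_sub_cancel]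
            _ ≤ ‖w‖ + ‖z - w‖ := norm_add_le _ _) hw2
    rw [hs]; exact this
  have hinner : (∫ w in ball (0 : E n) r, f w)
      ≤ 16 ^ q * s ^ (-q) * (r ^ ((n : ℝ) - μ) * J) := by
    have hb : ∀ w ∈ ball (0 : E n) r,
        f w ≤ (16 ^ q * s ^ (-q)) * ‖w‖ ^ (-μ) := by
      intro w hw
      have h1 : s / 16 ≤ 1 + ‖z - w‖ ^ 2 := by
        have := hscomp w hw; linarith
      have h2 : ((1 : ℝ) + ‖z - w‖ ^ 2) ^ (-(2 * (n : ℝ) - μ) / 2) ≤ (s / 16) ^ (-q) := by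
        rw [show (-(2 * (n : ℝ) - μ) / 2) = -q by rw [hq]; ring]
        exact Real.rpow_le_rpow_of_nonpos (div_pos hs0 (by norm_num)) h1 (neg_nonpos.2 hqpos.le)
      have h3 : (s / 16 : ℝ) ^ (-q) = 16 ^ q * s ^ (-q) := by
        rw [Real.div_rpow hs0.le (by norm_num : (0:ℝ) ≤ 16), Real.rpow_neg (by norm_num : (0:ℝ) ≤ 16)]
        field_simp
      calc f w ≤ ‖w‖ ^ (-μ) * (s / 16) ^ (-q) :=
            mul_le_mul_of_nonneg_left h2 (Real.rpow_nonneg (norm_nonneg _) _)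
        _ = (16 ^ q * s ^ (-q)) * ‖w‖ ^ (-μ) := by rw [h3]; ring
    calc (∫ w in ball (0 : E n) r, f w)
        ≤ ∫ w in ball (0 : E n) r, (16 ^ q * s ^ (-q)) * ‖w‖ ^ (-μ) := by
          apply setIntegral_mono_on hfint.integrableOn
            ((integrableOn_riesz_ball n μ hn hμ0 hμn hrpos).const_mul _)
            measurableSet_ball hb
      _ = (16 ^ q * s ^ (-q)) * ∫ w in ball (0 : E n) r, ‖w‖ ^ (-μ) :=
          MeasureTheory.integral_const_mul _ _
      _ = 16 ^ q * s ^ (-q) * (r ^ ((n : ℝ) - μ) * J) := by rw [ball_value n μ hrpos, hJ]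
  -- outer region
  have houter : (∫ w in (ball (0 : E n) r)ᶜ, f w) ≤ r ^ (-μ) * A := by
    have hb : ∀ w ∈ (ball (0 : E n) r)ᶜ,
        f w ≤ r ^ (-μ) * ((1 : ℝ) + ‖z - w‖ ^ 2) ^ (-(2 * (n : ℝ) - μ) / 2) := by
      intro w hw
      have h1 : r ≤ ‖w‖ := not_lt.1 fun hc => hw (mem_ball_zero_iff.2 hc)
      exact mul_le_mul_of_nonneg_right
        (Real.rpow_le_rpow_of_nonpos hrpos h1 (neg_nonpos.2 hμ0.le)) (hKz0 w)
    calc (∫ w in (ball (0 : E n) r)ᶜ, f w)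
        ≤ ∫ w in (ball (0 : E n) r)ᶜ,
            r ^ (-μ) * ((1 : ℝ) + ‖z - w‖ ^ 2) ^ (-(2 * (n : ℝ) - μ) / 2) :=
          setIntegral_mono_on hfint.integrableOn (hKz.const_mul _).integrableOn
            measurableSet_ball.compl hb
      _ ≤ ∫ w, r ^ (-μ) * ((1 : ℝ) + ‖z - w‖ ^ 2) ^ (-(2 * (n : ℝ) - μ) / 2) :=
          setIntegral_le_integral (hKz.const_mul _)
            (Eventually.of_forall fun w => mul_nonneg (Real.rpow_nonneg hrpos.le _) (hKz0 w))
      _ = r ^ (-μ) * ∫ w, ((1 : ℝ) + ‖z - w‖ ^ 2) ^ (-(2 * (n : ℝ) - μ) / 2) :=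
          MeasureTheory.integral_const_mul _ _
      _ = r ^ (-μ) * A := by
          rw [hA]
          congr 1
          exact integral_sub_left_eq_self
            (fun u : E n => ((1 : ℝ) + ‖u‖ ^ 2) ^ (-(2 * (n : ℝ) - μ) / 2)) volume z
  -- put the two together
  have e1 : 16 ^ q * s ^ (-q) * (r ^ ((n : ℝ) - μ) * J) ≤ (16 ^ q * J) * s ^ (-(μ/2)) := by
    have h1 : r ^ ((n : ℝ) - μ) ≤ s ^ (((n : ℝ) - μ)/2) := by
      have : r ≤ s ^ ((1:ℝ)/2) := by
        rw [hr]; linarith [Real.rpow_nonneg hs0.le ((1:ℝ)/2)]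
      calc r ^ ((n : ℝ) - μ) ≤ (s ^ ((1:ℝ)/2)) ^ ((n : ℝ) - μ) :=
            Real.rpow_le_rpow hrpos.le this (by linarith)
        _ = s ^ (((n : ℝ) - μ)/2) := by
            rw [← Real.rpow_mul hs0.le]; ring_nf
    have h2 : s ^ (-q) * s ^ (((n : ℝ) - μ)/2) = s ^ (-(n:ℝ)/2) := by
      rw [← Real.rpow_add hs0, hq]; ring_nf
    have h3 : s ^ (-(n:ℝ)/2) ≤ s ^ (-(μ/2)) :=
      Real.rpow_le_rpow_of_exponent_le hs1 (by linarith)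
    calc 16 ^ q * s ^ (-q) * (r ^ ((n : ℝ) - μ) * J)
        ≤ 16 ^ q * s ^ (-q) * (s ^ (((n : ℝ) - μ)/2) * J) := by
          exact mul_le_mul_of_nonneg_left (mul_le_mul_of_nonneg_right h1 hJ0)
            (mul_nonneg (Real.rpow_nonneg (by norm_num) _) (Real.rpow_nonneg hs0.le _))
      _ = (16 ^ q * J) * (s ^ (-q) * s ^ (((n : ℝ) - μ)/2)) := by ring
      _ = (16 ^ q * J) * s ^ (-(n:ℝ)/2) := by rw [h2]
      _ ≤ (16 ^ q * J) * s ^ (-(μ/2)) :=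
          mul_le_mul_of_nonneg_left h3 (mul_nonneg (Real.rpow_nonneg (by norm_num) _) hJ0)
  have e2 : r ^ (-μ) * A ≤ (2 ^ μ * A) * s ^ (-(μ/2)) := by
    have h1 : r ^ (-μ) = 2 ^ μ * s ^ (-(μ/2)) := by
      rw [hr, Real.div_rpow (Real.rpow_nonneg hs0.le _) (by norm_num : (0:ℝ) ≤ 2),
        ← Real.rpow_mul hs0.le, Real.rpow_neg (by norm_num : (0:ℝ) ≤ 2)]
      rw [show (1:ℝ)/2 * (-μ) = -(μ/2) by ring]
      field_simp
    rw [h1]; exact le_of_eq (by ring)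
  calc (∫ w, f w) = (∫ w in ball (0 : E n) r, f w) + ∫ w in (ball (0 : E n) r)ᶜ, f w := hsplit
    _ ≤ (16 ^ q * J) * s ^ (-(μ/2)) + (2 ^ μ * A) * s ^ (-(μ/2)) :=
        add_le_add (hinner.trans e1) (houter.trans e2)
    _ = (16 ^ q * J + 2 ^ μ * A) * s ^ (-(μ/2)) := by ring
    _ ≤ (16 ^ q * J + 2 ^ μ * A + 1) * s ^ (-(μ/2)) := by
        apply mul_le_mul_of_nonneg_right _ (Real.rpow_nonneg hs0.le _)
        linarith


end AuxRiesz

/-- pointwise decay of the Riesz potential of a rescaled bubble profile. -/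
theorem riesz_potential_bubble_decay (n : ℕ) (s μ : ℝ)
    (hs : 0 < s) (hns : 2 * s < n) (hμ0 : 0 < μ) (hμn : μ < n) (hμ4s : μ ≤ 4 * s) :
    ∃ C : ℝ, 0 < C ∧ ∀ (lam : ℝ), 0 < lam → ∀ ξ x : E n,
      (∫ y : E n, ‖y‖ ^ (-μ) *
          (lam ^ ((n : ℝ) - μ / 2) /
            (1 + lam ^ 2 * ‖x - ξ - y‖ ^ 2) ^ ((2 * (n : ℝ) - μ) / 2)))
        ≤ C * (lam ^ (μ / 2) / (1 + lam ^ 2 * ‖x - ξ‖ ^ 2) ^ (μ / 2)) := by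
  have hn : 0 < n := by
    have : (0:ℝ) < (n:ℝ) := by linarith
    exact_mod_cast Nat.cast_pos.1 this
  obtain ⟨C, hC, hkey⟩ := key_estimate n μ hn hμ0 hμn
  refine ⟨C, hC, fun lam hlam ξ x => ?_⟩
  set z : E n := lam • (x - ξ) with hz
  set F : E n → ℝ := fun w => ‖w‖ ^ (-μ) * (1 + ‖z - w‖ ^ 2) ^ (-(2 * (n : ℝ) - μ) / 2) with hF
  have hnormz : ‖z‖ ^ 2 = lam ^ 2 * ‖x - ξ‖ ^ 2 := by
    rw [hz, norm_smul, Real.norm_eq_abs, abs_of_pos hlam, mul_pow]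
  have hpt : ∀ y : E n, ‖y‖ ^ (-μ) *
      (lam ^ ((n : ℝ) - μ / 2) /
        (1 + lam ^ 2 * ‖x - ξ - y‖ ^ 2) ^ ((2 * (n : ℝ) - μ) / 2))
      = lam ^ ((n : ℝ) + μ / 2) * F (lam • y) := by
    intro y
    have h1 : ‖lam • y‖ ^ (-μ) = lam ^ (-μ) * ‖y‖ ^ (-μ) := by
      rw [norm_smul, Real.norm_eq_abs, abs_of_pos hlam, Real.mul_rpow hlam.le (norm_nonneg _)]
    have h2 : ‖z - lam • y‖ ^ 2 = lam ^ 2 * ‖x - ξ - y‖ ^ 2 := by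
      rw [hz, ← smul_sub, norm_smul, Real.norm_eq_abs, abs_of_pos hlam, mul_pow]
    have h3 : lam ^ ((n : ℝ) + μ / 2) * lam ^ (-μ) = lam ^ ((n : ℝ) - μ / 2) := by
      rw [← Real.rpow_add hlam]; congr 1; ring
    rw [hF]
    simp only []
    rw [h1, h2, neg_div,
      Real.rpow_neg (by positivity : (0:ℝ) ≤ 1 + lam ^ 2 * ‖x - ξ - y‖ ^ 2),
      div_eq_mul_inv, ← h3]
    ring
  have hint : (∫ y : E n, ‖y‖ ^ (-μ) *
      (lam ^ ((n : ℝ) - μ / 2) /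
        (1 + lam ^ 2 * ‖x - ξ - y‖ ^ 2) ^ ((2 * (n : ℝ) - μ) / 2)))
      = lam ^ ((n : ℝ) + μ / 2) * ((lam ^ (n : ℕ))⁻¹ * ∫ w : E n, F w) := by
    rw [integral_congr_ae (Eventually.of_forall hpt), MeasureTheory.integral_const_mul]
    congr 1
    have h := Measure.integral_comp_smul_of_nonneg (volume : Measure (E n)) F lam (hR := hlam.le)
    rw [finrank_euclideanSpace_fin] at h
    rw [h, smul_eq_mul]
  rw [hint]
  have hlamnn : 0 ≤ lam ^ ((n : ℝ) + μ / 2) * (lam ^ (n : ℕ))⁻¹ := by positivity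
  have hFle : (∫ w : E n, F w) ≤ C * (1 + ‖z‖ ^ 2) ^ (-(μ / 2)) := hkey z
  calc lam ^ ((n : ℝ) + μ / 2) * ((lam ^ (n : ℕ))⁻¹ * ∫ w : E n, F w)
      ≤ lam ^ ((n : ℝ) + μ / 2) * ((lam ^ (n : ℕ))⁻¹ * (C * (1 + ‖z‖ ^ 2) ^ (-(μ / 2)))) := by
        apply mul_le_mul_of_nonneg_left _ (Real.rpow_nonneg hlam.le _)
        exact mul_le_mul_of_nonneg_left hFle (by positivity)
    _ = C * (lam ^ (μ / 2) / (1 + lam ^ 2 * ‖x - ξ‖ ^ 2) ^ (μ / 2)) := by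
        rw [← hnormz]
        have h4 : lam ^ ((n : ℝ) + μ / 2) * (lam ^ (n : ℕ))⁻¹ = lam ^ (μ / 2) := by
          rw [← Real.rpow_natCast lam n, ← Real.rpow_neg hlam.le, ← Real.rpow_add hlam]
          congr 1; ring
        rw [Real.rpow_neg (by positivity : (0:ℝ) ≤ 1 + ‖z‖ ^ 2) (μ / 2),
          div_eq_mul_inv (lam ^ (μ / 2)), ← h4]
        ring


end NonlocalSobolev
end
end

section
/- Let $n=6s$, $\mu=4s$, and define for bubbles $W_i$, $i=1,\dots,\kappa$, with $z_i=\lambda_i(x-\xi_i)$, $\tau(z)=(1+|z|^2)^{1/2}$, the weight $S(x)=\sum_{i=1}^\kappa\big[\frac{\lambda_i^{2s}}{\tau(z_i)^{2s}\mathscr{R}^{4s}}\chi_{\{|z_i|\le\mathscr{R}^2\}}+\frac{\lambda_i^{2s}}{\tau(z_i)^{3s}\mathscr{R}^{2s}}\chi_{\{|z_i|>\mathscr{R}^2\}}\big]$ and $T(x)=\sum_{i=1}^\kappa\big[\frac{\lambda_i^{4s}}{\tau(z_i)^{4s}\mathscr{R}^{4s}}\chi_{\{|z_i|\le\mathscr{R}^2\}}+\frac{\lambda_i^{4s}}{\tau(z_i)^{5s}\mathscr{R}^{2s}}\chi_{\{|z_i|>\mathscr{R}^2\}}\big]$.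 Then $\|S\|_{L^3(\mathbb{R}^{6s})}\lesssim\mathscr{R}^{-4s}(\log\mathscr{R})^{1/3}$ and $\|T\|_{L^{3/2}(\mathbb{R}^{6s})}\lesssim\mathscr{R}^{-4s}(\log\mathscr{R})^{2/3}$ for large $\mathscr{R}$. -/
/-!
Both weights have the form `∑ᵢ λᵢ^{n/p} ψ(λᵢ|x - ξᵢ|)` for one radial profile `ψ` (with `p = 3`
for `S` and `p = 3/2` for `T`), so by convexity of `t ↦ tᵖ` and scale invariance of
`∫ λⁿ f(λ(x - ξ)) dx` it suffices to bound `∫ ψ(|z|)ᵖ dz`. In polar coordinates, on `r ≤ 𝓡²` the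
integrand is `𝓡^{-4sp} r^{n-1}(1 + r²)^{-n/2} ≲ 𝓡^{-4sp}/(1 + r)`, which produces the factor
`log 𝓡`, while beyond `𝓡²` it decays faster than `r^{-1}` and contributes only `O(𝓡^{-4sp})`.
-/

noncomputable section
open MeasureTheory Real Filter
open scoped FourierTransform Topology

namespace NonlocalSobolev

open Classical in
/-- The weight `S(x)` (case `n = 6s`, `μ = 4s`), with `z_i = λ_i(x-ξ_i)`,
`τ(z) = (1+|z|²)^{1/2}`. -/
def weightS (n : ℕ) (s : ℝ) (κ : ℕ) (ξ : Fin κ → E n) (lam : Fin κ → ℝ) (R : ℝ)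
    (x : E n) : ℝ :=
  ∑ i : Fin κ,
    if lam i * ‖x - ξ i‖ ≤ R ^ 2 then
      lam i ^ (2 * s) / ((1 + (lam i * ‖x - ξ i‖) ^ 2) ^ s * R ^ (4 * s))
    else
      lam i ^ (2 * s) / ((1 + (lam i * ‖x - ξ i‖) ^ 2) ^ (3 * s / 2) * R ^ (2 * s))

open Classical in
/-- The weight `T(x)` (case `n = 6s`, `μ = 4s`). -/
def weightT (n : ℕ) (s : ℝ) (κ : ℕ) (ξ : Fin κ → E n) (lam : Fin κ → ℝ) (R : ℝ)
    (x : E n) : ℝ :=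
  ∑ i : Fin κ,
    if lam i * ‖x - ξ i‖ ≤ R ^ 2 then
      lam i ^ (4 * s) / ((1 + (lam i * ‖x - ξ i‖) ^ 2) ^ (2 * s) * R ^ (4 * s))
    else
      lam i ^ (4 * s) / ((1 + (lam i * ‖x - ξ i‖) ^ 2) ^ (5 * s / 2) * R ^ (2 * s))

open Set Metric

lemma continuous_pow_mul_one_add_sq_rpow (k : ℕ) (β : ℝ) :
    Continuous fun r : ℝ => r ^ k * (1 + r ^ 2) ^ β :=
  (continuous_pow k).mul <|
    (continuous_const.add (continuous_pow 2)).rpow_const fun r =>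
      Or.inl (by positivity : (0 : ℝ) < 1 + r ^ 2).ne'

lemma pow_mul_one_add_sq_rpow_neg_half_le {d : ℕ} (hd : 1 ≤ d) {r : ℝ} (hr : 0 ≤ r) :
    r ^ (d - 1) * (1 + r ^ 2) ^ (-((d : ℝ) / 2)) ≤ √2 * (1 + r)⁻¹ := by
  set t := √(1 + r ^ 2) with ht_def
  have ht : 0 < t := by positivity
  have hrt : r ≤ t := Real.le_sqrt_of_sq_le (by linarith)
  have hpow : (1 + r ^ 2) ^ (-((d : ℝ) / 2)) = (t ^ d)⁻¹ := by
    rw [← Real.sq_sqrt (by positivity : (0 : ℝ) ≤ 1 + r ^ 2), ← ht_def, ← Real.rpow_natCast t 2,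
      ← Real.rpow_mul ht.le, ← Real.rpow_natCast, ← Real.rpow_neg ht.le]
    ring_nf
  have hsum : 1 + r ≤ √2 * t := by
    rw [ht_def, ← Real.sqrt_mul zero_le_two]
    exact Real.le_sqrt_of_sq_le (by nlinarith [sq_nonneg (1 - r)])
  calc r ^ (d - 1) * (1 + r ^ 2) ^ (-((d : ℝ) / 2)) = r ^ (d - 1) / t ^ (d - 1 + 1) := by
        rw [hpow, Nat.sub_add_cancel hd, div_eq_mul_inv]
    _ ≤ t ^ (d - 1) / t ^ (d - 1 + 1) := by gcongr
    _ = t⁻¹ := by rw [pow_succ, div_mul_cancel_left₀ (by positivity)]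
    _ ≤ √2 * (1 + r)⁻¹ := by
        rw [← div_eq_mul_inv, inv_eq_one_div, div_le_div_iff₀ ht (by positivity)]
        linarith

lemma integral_Ioc_pow_mul_one_add_sq_rpow_neg_half_le {d : ℕ} (hd : 1 ≤ d) {ρ : ℝ}
    (hρ : 0 ≤ ρ) :
    ∫ r in Ioc 0 ρ, r ^ (d - 1) * (1 + r ^ 2) ^ (-((d : ℝ) / 2)) ≤ √2 * log (1 + ρ) := by
  have hmajorant : ∫ r in Ioc 0 ρ, √2 * (1 + r)⁻¹ = √2 * log (1 + ρ) := by
    rw [integral_const_mul, ← intervalIntegral.integral_of_le hρ,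
      intervalIntegral.integral_comp_add_left (fun u => u⁻¹) 1,
      integral_inv_of_pos (by norm_num) (by positivity)]
    simp
  rw [← hmajorant]
  refine setIntegral_mono_on (continuous_pow_mul_one_add_sq_rpow _ _).integrableOn_Ioc ?_
    measurableSet_Ioc fun r hr => pow_mul_one_add_sq_rpow_neg_half_le hd hr.1.le
  refine (ContinuousOn.integrableOn_Icc ?_).mono_set Ioc_subset_Icc_self
  exact continuousOn_const.mul <| (continuous_const.add continuous_id).continuousOn.inv₀
    fun r hr => by simp only [Pi.add_apply, id]; linarith [hr.1]

lemma pow_mul_one_add_sq_rpow_neg_le_rpow {d : ℕ} (hd : 1 ≤ d) {γ r : ℝ} (hγ : 0 ≤ γ)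
    (hr : 0 < r) :
    r ^ (d - 1) * (1 + r ^ 2) ^ (-γ) ≤ r ^ ((d : ℝ) - 1 - 2 * γ) := by
  have hsq : (1 + r ^ 2) ^ (-γ) ≤ r ^ (-(2 * γ)) := by
    rw [show -(2 * γ) = 2 * -γ by ring, Real.rpow_mul hr.le, Real.rpow_two]
    exact Real.rpow_le_rpow_of_nonpos (by positivity) (by linarith) (by linarith)
  calc r ^ (d - 1) * (1 + r ^ 2) ^ (-γ) ≤ r ^ ((d : ℝ) - 1) * r ^ (-(2 * γ)) := by
        rw [← Real.rpow_natCast, Nat.cast_sub hd, Nat.cast_one]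
        gcongr
    _ = r ^ ((d : ℝ) - 1 - 2 * γ) := by rw [← Real.rpow_add hr, ← sub_eq_add_neg]

lemma integrableOn_Ioi_pow_mul_one_add_sq_rpow_neg {d : ℕ} (hd : 1 ≤ d) {γ ρ : ℝ}
    (hγ : (d : ℝ) < 2 * γ) (hρ : 0 < ρ) :
    IntegrableOn (fun r : ℝ => r ^ (d - 1) * (1 + r ^ 2) ^ (-γ)) (Ioi ρ) := by
  refine (integrableOn_Ioi_rpow_of_lt (a := (d : ℝ) - 1 - 2 * γ) (by linarith) hρ).mono'
    (continuous_pow_mul_one_add_sq_rpow _ _).aestronglyMeasurable ?_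
  refine (ae_restrict_iff' measurableSet_Ioi).2 (.of_forall fun r (hr : ρ < r) => ?_)
  have hr0 : 0 < r := hρ.trans hr
  rw [Real.norm_of_nonneg (by positivity)]
  exact pow_mul_one_add_sq_rpow_neg_le_rpow hd (by linarith [(d.cast_nonneg : (0 : ℝ) ≤ d)]) hr0

lemma integral_Ioi_pow_mul_one_add_sq_rpow_neg_le {d : ℕ} (hd : 1 ≤ d) {γ ρ : ℝ}
    (hγ : (d : ℝ) < 2 * γ) (hρ : 0 < ρ) :
    ∫ r in Ioi ρ, r ^ (d - 1) * (1 + r ^ 2) ^ (-γ) ≤ ρ ^ ((d : ℝ) - 2 * γ) / (2 * γ - d) := by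
  have hexp : (d : ℝ) - 1 - 2 * γ < -1 := by linarith
  have hmajorant :
      ∫ r in Ioi ρ, r ^ ((d : ℝ) - 1 - 2 * γ) = ρ ^ ((d : ℝ) - 2 * γ) / (2 * γ - d) := by
    rw [integral_Ioi_rpow_of_lt hexp hρ, show (d : ℝ) - 1 - 2 * γ + 1 = -(2 * γ - d) by ring,
      div_neg, neg_div, neg_neg, neg_sub]
  rw [← hmajorant]
  refine setIntegral_mono_on (integrableOn_Ioi_pow_mul_one_add_sq_rpow_neg hd hγ hρ)
    (integrableOn_Ioi_rpow_of_lt hexp hρ) measurableSet_Ioi fun r (hr : ρ < r) => ?_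
  exact pow_mul_one_add_sq_rpow_neg_le_rpow hd (by linarith [(d.cast_nonneg : (0 : ℝ) ≤ d)]) (hρ.trans hr)

def splitProfile (ρ a β c γ r : ℝ) : ℝ :=
  if r ≤ ρ then a * (1 + r ^ 2) ^ (-β) else c * (1 + r ^ 2) ^ (-γ)

lemma splitProfile_nonneg {ρ a β c γ : ℝ} (ha : 0 ≤ a) (hc : 0 ≤ c) (r : ℝ) :
    0 ≤ splitProfile ρ a β c γ r := by
  unfold splitProfile
  split_ifs <;> positivity

lemma splitProfile_rpow {ρ a β c γ : ℝ} (ha : 0 ≤ a) (hc : 0 ≤ c) (r p : ℝ) :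
    splitProfile ρ a β c γ r ^ p = splitProfile ρ (a ^ p) (β * p) (c ^ p) (γ * p) r := by
  unfold splitProfile
  split_ifs <;>
    rw [Real.mul_rpow (by assumption) (by positivity), ← Real.rpow_mul (by positivity), neg_mul]

lemma splitProfile_radial_eqOn_Ioc (k : ℕ) (ρ a β c γ : ℝ) :
    EqOn (fun y : ℝ => y ^ k • splitProfile ρ a β c γ y)
      (fun y => a * (y ^ k * (1 + y ^ 2) ^ (-β))) (Ioc 0 ρ) := fun y hy => by
  simp only [splitProfile, if_pos hy.2, smul_eq_mul]; ring

lemma splitProfile_radial_eqOn_Ioi (k : ℕ) (ρ a β c γ : ℝ) :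
    EqOn (fun y : ℝ => y ^ k • splitProfile ρ a β c γ y)
      (fun y => c * (y ^ k * (1 + y ^ 2) ^ (-γ))) (Ioi ρ) := fun y (hy : ρ < y) => by
  simp only [splitProfile, if_neg hy.not_ge, smul_eq_mul]; ring

lemma integrableOn_Ioc_splitProfile_radial (k : ℕ) (ρ a β c γ : ℝ) :
    IntegrableOn (fun y : ℝ => y ^ k • splitProfile ρ a β c γ y) (Ioc 0 ρ) :=
  IntegrableOn.congr_fun (((continuous_pow_mul_one_add_sq_rpow _ _).integrableOn_Ioc).const_mul a)
    (splitProfile_radial_eqOn_Ioc _ _ _ _ _ _).symm measurableSet_Ioc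

lemma integrableOn_Ioi_splitProfile_radial {d : ℕ} (hd : 1 ≤ d) {ρ γ : ℝ} (a β c : ℝ)
    (hγ : (d : ℝ) < 2 * γ) (hρ : 0 < ρ) :
    IntegrableOn (fun y : ℝ => y ^ (d - 1) • splitProfile ρ a β c γ y) (Ioi ρ) :=
  IntegrableOn.congr_fun ((integrableOn_Ioi_pow_mul_one_add_sq_rpow_neg hd hγ hρ).const_mul c)
    (splitProfile_radial_eqOn_Ioi _ _ _ _ _ _).symm measurableSet_Ioi

/-- `weightS` and `weightT` are `splitWeight` with `(a, b, c, b', c')` equal to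
`(2s, s, 4s, 3s/2, 2s)` and `(4s, 2s, 4s, 5s/2, 2s)`. -/
def splitWeight {E : Type*} [NormedAddCommGroup E] {κ : ℕ} (ξ : Fin κ → E) (lam : Fin κ → ℝ)
    (R a b c b' c' : ℝ) (x : E) : ℝ :=
  ∑ i : Fin κ,
    if lam i * ‖x - ξ i‖ ≤ R ^ 2 then
      lam i ^ a / ((1 + (lam i * ‖x - ξ i‖) ^ 2) ^ b * R ^ c)
    else
      lam i ^ a / ((1 + (lam i * ‖x - ξ i‖) ^ 2) ^ b' * R ^ c')

lemma splitWeight_eq_sum_splitProfile {E : Type*} [NormedAddCommGroup E] [NormedSpace ℝ E]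
    {κ : ℕ} (ξ : Fin κ → E) {lam : Fin κ → ℝ} (hlam : ∀ i, 0 < lam i) {R : ℝ} (hR : 0 < R)
    (a b c b' c' : ℝ) (x : E) :
    splitWeight ξ lam R a b c b' c' x =
      ∑ i, lam i ^ a * splitProfile (R ^ 2) (R ^ (-c)) b (R ^ (-c')) b' ‖lam i • (x - ξ i)‖ := by
  refine Finset.sum_congr rfl fun i _ => ?_
  rw [norm_smul, Real.norm_of_nonneg (hlam i).le, splitProfile]
  split_ifs <;> rw [Real.rpow_neg hR.le, Real.rpow_neg (by positivity)] <;> ring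

section HaarMeasure

variable {E : Type*} [NormedAddCommGroup E] [NormedSpace ℝ E] [MeasurableSpace E] [BorelSpace E]
  [FiniteDimensional ℝ E] (μ : Measure E) [μ.IsAddHaarMeasure]

local notation "dim" => Module.finrank ℝ E

lemma integrable_splitProfile_norm (hd : 1 ≤ dim) {ρ a c γ : ℝ} (hρ : 0 < ρ)
    (hγ : (dim : ℝ) < 2 * γ) :
    Integrable (fun x : E => splitProfile ρ a ((dim : ℝ) / 2) c γ ‖x‖) μ := by
  have : Nontrivial E := Module.finrank_pos_iff.1 hd
  rw [integrable_fun_norm_addHaar μ, ← Ioc_union_Ioi_eq_Ioi hρ.le]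
  exact (integrableOn_Ioc_splitProfile_radial _ _ _ _ _ _).union
    (integrableOn_Ioi_splitProfile_radial hd _ _ _ hγ hρ)

lemma integral_splitProfile_norm_le (hd : 1 ≤ dim) {ρ a c γ : ℝ} (hρ : 0 < ρ) (ha : 0 ≤ a)
    (hc : 0 ≤ c) (hγ : (dim : ℝ) < 2 * γ) :
    ∫ x : E, splitProfile ρ a ((dim : ℝ) / 2) c γ ‖x‖ ∂μ ≤
      dim * μ.real (ball 0 1) *
        (a * (√2 * log (1 + ρ)) + c * (ρ ^ ((dim : ℝ) - 2 * γ) / (2 * γ - dim))) := by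
  have : Nontrivial E := Module.finrank_pos_iff.1 hd
  rw [integral_fun_norm_addHaar μ, nsmul_eq_mul, smul_eq_mul, mul_assoc,
    ← Ioc_union_Ioi_eq_Ioi hρ.le, setIntegral_union (Ioc_disjoint_Ioi le_rfl) measurableSet_Ioi
      (integrableOn_Ioc_splitProfile_radial _ _ _ _ _ _)
      (integrableOn_Ioi_splitProfile_radial hd _ _ _ hγ hρ),
    setIntegral_congr_fun measurableSet_Ioc (splitProfile_radial_eqOn_Ioc _ _ _ _ _ _),
    setIntegral_congr_fun measurableSet_Ioi (splitProfile_radial_eqOn_Ioi _ _ _ _ _ _),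
    integral_const_mul, integral_const_mul]
  gcongr
  · exact integral_Ioc_pow_mul_one_add_sq_rpow_neg_half_le hd hρ.le
  · exact integral_Ioi_pow_mul_one_add_sq_rpow_neg_le hd hγ hρ

lemma exists_integral_splitProfile_sq_norm_le (hd : 1 ≤ dim) {A C γ : ℝ}
    (hγ : (dim : ℝ) < 2 * γ) (hA : A = C + 2 * (2 * γ - dim)) :
    ∃ K, 0 ≤ K ∧ ∀ R, 3 ≤ R →
      ∫ x : E, splitProfile (R ^ 2) (R ^ (-A)) ((dim : ℝ) / 2) (R ^ (-C)) γ ‖x‖ ∂μ ≤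
        K * R ^ (-A) * log R := by
  refine ⟨dim * μ.real (ball 0 1) * (√2 * 3 + 1 / (2 * γ - dim)),
    by have := sub_pos.2 hγ; positivity, fun R hR => ?_⟩
  have hR0 : 0 < R := by linarith
  have hlog : 1 ≤ log R := by
    rw [Real.le_log_iff_exp_le hR0]; linarith [Real.exp_one_lt_three]
  have hcore : log (1 + R ^ 2) ≤ 3 * log R := by
    calc log (1 + R ^ 2) ≤ log (R ^ 3) := Real.log_le_log (by positivity) (by nlinarith)
      _ = 3 * log R := by rw [Real.log_pow]; norm_num
  have htail : R ^ (-C) * (R ^ 2) ^ ((dim : ℝ) - 2 * γ) = R ^ (-A) := by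
    rw [← Real.rpow_natCast, ← Real.rpow_mul hR0.le, ← Real.rpow_add hR0, hA]
    ring_nf
  calc ∫ x : E, splitProfile (R ^ 2) (R ^ (-A)) ((dim : ℝ) / 2) (R ^ (-C)) γ ‖x‖ ∂μ
      ≤ dim * μ.real (ball 0 1) * (R ^ (-A) * (√2 * log (1 + R ^ 2)) +
          R ^ (-C) * ((R ^ 2) ^ ((dim : ℝ) - 2 * γ) / (2 * γ - dim))) :=
        integral_splitProfile_norm_le μ hd (by positivity) (by positivity) (by positivity) hγ
    _ = dim * μ.real (ball 0 1) * (R ^ (-A) * (√2 * log (1 + R ^ 2)) +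
          R ^ (-A) / (2 * γ - dim)) := by rw [← htail, mul_div_assoc]
    _ ≤ dim * μ.real (ball 0 1) * (R ^ (-A) * (√2 * (3 * log R)) +
          R ^ (-A) / (2 * γ - dim) * log R) := by
        gcongr
        exact le_mul_of_one_le_right (by positivity) hlog
    _ = dim * μ.real (ball 0 1) * (√2 * 3 + 1 / (2 * γ - dim)) * R ^ (-A) * log R := by ring

lemma integrable_rescale {f : E → ℝ} (hf : Integrable f μ) {lam : ℝ} (hlam : lam ≠ 0) (ξ : E) :
    Integrable (fun x => f (lam • (x - ξ))) μ :=
  ((integrable_comp_smul_iff μ f hlam).2 hf).comp_sub_right ξ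

lemma integral_pow_finrank_mul_rescale (f : E → ℝ) {lam : ℝ} (hlam : 0 < lam) (ξ : E) :
    ∫ x, lam ^ dim * f (lam • (x - ξ)) ∂μ = ∫ x, f x ∂μ := by
  rw [integral_const_mul, integral_sub_right_eq_self (fun x => f (lam • x)),
    Measure.integral_comp_smul_of_nonneg μ f lam (hR := hlam.le), smul_eq_mul,
    mul_inv_cancel_left₀ (by positivity)]

lemma integral_sum_rescale_rpow_le {g : E → ℝ} (hg : ∀ x, 0 ≤ g x) {a p : ℝ} (hp : 1 ≤ p)
    (ha : a * p = dim) (hgp : Integrable (fun x => g x ^ p) μ) {κ : ℕ} (ξ : Fin κ → E)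
    {lam : Fin κ → ℝ} (hlam : ∀ i, 0 < lam i) :
    ∫ x, (∑ i, lam i ^ a * g (lam i • (x - ξ i))) ^ p ∂μ ≤ κ ^ p * ∫ x, g x ^ p ∂μ := by
  have hterm : ∀ i x, (lam i ^ a * g (lam i • (x - ξ i))) ^ p =
      lam i ^ dim * g (lam i • (x - ξ i)) ^ p := fun i x => by
    rw [Real.mul_rpow (by have := hlam i; positivity) (hg _), ← Real.rpow_mul (hlam i).le, ha,
      Real.rpow_natCast]
  have hint : ∀ i, Integrable (fun x => lam i ^ dim * g (lam i • (x - ξ i)) ^ p) μ := fun i =>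
    (integrable_rescale μ hgp (hlam i).ne' (ξ i)).const_mul _
  have hsummand : ∀ x, ∀ i ∈ Finset.univ, 0 ≤ lam i ^ a * g (lam i • (x - ξ i)) :=
    fun x i _ => mul_nonneg (Real.rpow_nonneg (hlam i).le _) (hg _)
  calc ∫ x, (∑ i, lam i ^ a * g (lam i • (x - ξ i))) ^ p ∂μ
      ≤ ∫ x, (κ : ℝ) ^ (p - 1) * ∑ i, lam i ^ dim * g (lam i • (x - ξ i)) ^ p ∂μ := by
        refine integral_mono_of_nonneg (.of_forall fun x => ?_)
          ((integrable_finsetSum _ fun i _ => hint i).const_mul _) (.of_forall fun x => ?_)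
        · exact Real.rpow_nonneg (Finset.sum_nonneg (hsummand x)) _
        · simpa only [Finset.card_univ, Fintype.card_fin, hterm] using
            Real.rpow_sum_le_const_mul_sum_rpow_of_nonneg Finset.univ hp (hsummand x)
    _ = (κ : ℝ) ^ (p - 1) * (κ * ∫ x, g x ^ p ∂μ) := by
        rw [integral_const_mul, integral_finsetSum _ fun i _ => hint i]
        rw [Finset.sum_congr rfl fun i _ =>
          integral_pow_finrank_mul_rescale μ (fun y => g y ^ p) (hlam i) (ξ i)]
        simp only [Finset.sum_const, Finset.card_univ, Fintype.card_fin, nsmul_eq_mul]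
    _ = κ ^ p * ∫ x, g x ^ p ∂μ := by
        rw [← mul_assoc, ← Real.rpow_add_one' (Nat.cast_nonneg κ) (by linarith), sub_add_cancel]

theorem exists_integral_splitWeight_rpow_le (hd : 1 ≤ dim) {p q a b c b' c' : ℝ} (hp : 1 ≤ p)
    (hpq : p * q = 1) (ha : a * p = dim) (hb : b * p = dim / 2) (hb' : (dim : ℝ) < 2 * (b' * p))
    (hc : c * p = c' * p + 2 * (2 * (b' * p) - dim)) (κ : ℕ) :
    ∃ K, ∀ R, 3 ≤ R → ∀ (ξ : Fin κ → E) (lam : Fin κ → ℝ), (∀ i, 0 < lam i) →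
      (∫ x, splitWeight ξ lam R a b c b' c' x ^ p ∂μ) ^ q ≤ K * R ^ (-c) * log R ^ q := by
  obtain ⟨K, hK, hprofile⟩ := exists_integral_splitProfile_sq_norm_le μ hd hb' hc
  refine ⟨(κ ^ p * K) ^ q, fun R hR ξ lam hlam => ?_⟩
  have hR0 : 0 < R := by linarith
  have hq : 0 ≤ q := by nlinarith
  set g : E → ℝ := fun z => splitProfile (R ^ 2) (R ^ (-c)) b (R ^ (-c')) b' ‖z‖
  have hg : ∀ z, 0 ≤ g z := fun z => splitProfile_nonneg (by positivity) (by positivity) _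
  have hgp : (fun z => g z ^ p) = fun z =>
      splitProfile (R ^ 2) (R ^ (-(c * p))) ((dim : ℝ) / 2) (R ^ (-(c' * p))) (b' * p) ‖z‖ := by
    funext z
    rw [splitProfile_rpow (by positivity) (by positivity), hb, ← Real.rpow_mul hR0.le,
      ← Real.rpow_mul hR0.le, neg_mul, neg_mul]
  have hLp : ∫ x, splitWeight ξ lam R a b c b' c' x ^ p ∂μ ≤
      κ ^ p * (K * R ^ (-(c * p)) * log R) := by
    simp only [splitWeight_eq_sum_splitProfile ξ hlam hR0]
    refine (integral_sum_rescale_rpow_le μ hg hp ha ?_ ξ hlam).trans ?_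
    · rw [hgp]; exact integrable_splitProfile_norm μ hd (by positivity) hb'
    · rw [hgp]; gcongr; exact hprofile R hR
  have hw : ∀ x, 0 ≤ splitWeight ξ lam R a b c b' c' x := fun x => by
    rw [splitWeight_eq_sum_splitProfile ξ hlam hR0]
    exact Finset.sum_nonneg fun i _ => mul_nonneg (Real.rpow_nonneg (hlam i).le _) (hg _)
  calc (∫ x, splitWeight ξ lam R a b c b' c' x ^ p ∂μ) ^ q
      ≤ (κ ^ p * (K * R ^ (-(c * p)) * log R)) ^ q :=
        Real.rpow_le_rpow (integral_nonneg fun x => Real.rpow_nonneg (hw x) _) hLp hq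
    _ = (κ ^ p * K) ^ q * R ^ (-c) * log R ^ q := by
        have hlog : 0 ≤ log R := Real.log_nonneg (by linarith)
        rw [← mul_assoc, ← mul_assoc, Real.mul_rpow (by positivity) hlog,
          Real.mul_rpow (by positivity) (by positivity), ← Real.rpow_mul hR0.le, neg_mul,
          mul_assoc c, hpq, mul_one]

end HaarMeasure

theorem weight_norm_estimates_general (n : ℕ) (s : ℝ) (hs : 0 < s) (hn6 : (n : ℝ) = 6 * s)
    (κ : ℕ) :
    ∃ C : ℝ, 0 < C ∧ ∃ R0 : ℝ, 1 < R0 ∧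
      ∀ R : ℝ, R0 ≤ R →
        ∀ (ξ : Fin κ → E n) (lam : Fin κ → ℝ), (∀ i, 0 < lam i) →
          (∫ x : E n, weightS n s κ ξ lam R x ^ (3 : ℝ)) ^ ((1 : ℝ) / 3)
              ≤ C * R ^ (-(4 * s)) * Real.log R ^ ((1 : ℝ) / 3) ∧
            (∫ x : E n, weightT n s κ ξ lam R x ^ ((3 : ℝ) / 2)) ^ ((2 : ℝ) / 3)
              ≤ C * R ^ (-(4 * s)) * Real.log R ^ ((2 : ℝ) / 3) := by
  have hdim : (Module.finrank ℝ (E n) : ℝ) = 6 * s := by rw [finrank_euclideanSpace_fin, hn6]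
  have hd : 1 ≤ Module.finrank ℝ (E n) := by
    rw [finrank_euclideanSpace_fin]; exact Nat.cast_pos.mp (by linarith : (0 : ℝ) < n)
  obtain ⟨KS, hS⟩ := exists_integral_splitWeight_rpow_le (volume : Measure (E n)) hd
    (p := 3) (q := 1 / 3) (a := 2 * s) (b := s) (c := 4 * s) (b' := 3 * s / 2) (c' := 2 * s)
    (by norm_num) (by norm_num) (by linarith) (by linarith) (by linarith) (by linarith) κ
  obtain ⟨KT, hT⟩ := exists_integral_splitWeight_rpow_le (volume : Measure (E n)) hd
    (p := 3 / 2) (q := 2 / 3) (a := 4 * s) (b := 2 * s) (c := 4 * s) (b' := 5 * s / 2)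
    (c' := 2 * s) (by norm_num) (by norm_num) (by linarith) (by linarith) (by linarith)
    (by linarith) κ
  refine ⟨max (max KS KT) 1, by positivity, 3, by norm_num, fun R hR ξ lam hlam => ?_⟩
  have hC : ∀ K q : ℝ, K ≤ max (max KS KT) 1 →
      K * R ^ (-(4 * s)) * log R ^ q ≤ max (max KS KT) 1 * R ^ (-(4 * s)) * log R ^ q :=
    fun K q hK => by
      have := Real.rpow_nonneg (Real.log_nonneg (by linarith : (1 : ℝ) ≤ R)) q
      gcongr
  exact ⟨(hS R hR ξ lam hlam).trans (hC _ _ (by simp)),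
    (hT R hR ξ lam hlam).trans (hC _ _ (by simp))⟩

/-- `L³` and `L^{3/2}` bounds for the weights `S` and `T`
in the critical case `n = 6s`, `μ = 4s`, for large `𝓡`. -/
theorem weight_norm_estimates (n : ℕ) (s : ℝ) (hs : 0 < s) (hn6 : (n : ℝ) = 6 * s)
    (κ : ℕ) (hκ : 0 < κ) :
    ∃ C : ℝ, 0 < C ∧ ∃ R0 : ℝ, 1 < R0 ∧
      ∀ R : ℝ, R0 ≤ R →
        ∀ (ξ : Fin κ → E n) (lam : Fin κ → ℝ), (∀ i, 0 < lam i) →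
          (∫ x : E n, weightS n s κ ξ lam R x ^ (3 : ℝ)) ^ ((1 : ℝ) / 3)
              ≤ C * R ^ (-(4 * s)) * Real.log R ^ ((1 : ℝ) / 3) ∧
            (∫ x : E n, weightT n s κ ξ lam R x ^ ((3 : ℝ) / 2)) ^ ((2 : ℝ) / 3)
              ≤ C * R ^ (-(4 * s)) * Real.log R ^ ((2 : ℝ) / 3) :=
  weight_norm_estimates_general n s hs hn6 κ

end NonlocalSobolev
end
end
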